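/- arXiv:2201.12691 — 5 statements merged into one kernel-verified Lean document; each statement's English description precedes it below -/
import Mathlib

section
/- Let f : ℝⁿ → ℝ be convex and differentiable, h : ℝⁿ → ℝ convex, g : ℝⁿ → ℝ concave and differentiable, with g(x) > 0 and f(x) + h(x) ≥ 0 for all x. Define F(x) = (f(x) + h(x))/g(x). If x̄ satisfies 0 ∈ ∇f(x̄) + ∂h(x̄) − F(x̄)·∇g(x̄), then F(x̄) ≤ F(x) for all x, i.e., any critical point of the convex-concave fractional problem is a global minimum. -/
/-!
Evaluate the three tangent inequalities at `xb`: `f` lies above its tangent plane, `h` above the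
affine minorant given by the subgradient `v`, and `g` below its tangent plane. Multiplying the last
one by `F(xb) ≥ 0` and adding, the criticality condition cancels every first-order term, leaving
`F(xb) g(x) ≤ f(x) + h(x)`.
-/

open scoped RealInnerProductSpace

theorem ConvexOn.add_fderiv_sub_le {E : Type*} [NormedAddCommGroup E] [NormedSpace ℝ E]
    {s : Set E} {f : E → ℝ} {f' : E →L[ℝ] ℝ} {x y : E} (hf : ConvexOn ℝ s f)
    (hx : x ∈ s) (hy : y ∈ s) (hfx : HasFDerivAt f f' x) :
    f x + f' (y - x) ≤ f y := by
  set ℓ : ℝ →ᵃ[ℝ] E := AffineMap.lineMap x y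
  have hderiv : HasDerivAt (f ∘ ℓ) (f' (y - x)) 0 := by
    rw [← AffineMap.lineMap_apply_zero (k := ℝ) x y] at hfx
    exact hfx.comp_hasDerivAt 0 AffineMap.hasDerivAt_lineMap
  have hslope := (hf.comp_affineMap ℓ).le_slope_of_hasDerivAt (by simpa [ℓ]) (by simpa [ℓ])
    zero_lt_one hderiv
  simp only [slope_def_field, Function.comp_apply, ℓ, AffineMap.lineMap_apply_zero,
    AffineMap.lineMap_apply_one, sub_zero, div_one] at hslope
  linarith

theorem ConcaveOn.le_add_fderiv_sub {E : Type*} [NormedAddCommGroup E] [NormedSpace ℝ E]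
    {s : Set E} {f : E → ℝ} {f' : E →L[ℝ] ℝ} {x y : E} (hf : ConcaveOn ℝ s f)
    (hx : x ∈ s) (hy : y ∈ s) (hfx : HasFDerivAt f f' x) :
    f y ≤ f x + f' (y - x) := by
  have := hf.neg.add_fderiv_sub_le hx hy hfx.neg
  simp only [Pi.neg_apply, neg_apply] at this
  linarith

section Gradient

variable {E : Type*} [NormedAddCommGroup E] [InnerProductSpace ℝ E] [CompleteSpace E]
  {s : Set E} {f : E → ℝ} {f' x y : E}

theorem ConvexOn.add_inner_gradient_sub_le (hf : ConvexOn ℝ s f) (hx : x ∈ s) (hy : y ∈ s)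
    (hfx : HasGradientAt f f' x) : f x + ⟪f', y - x⟫ ≤ f y :=
  hf.add_fderiv_sub_le hx hy hfx.hasFDerivAt

theorem ConcaveOn.le_add_inner_gradient_sub (hf : ConcaveOn ℝ s f) (hx : x ∈ s) (hy : y ∈ s)
    (hfx : HasGradientAt f f' x) : f y ≤ f x + ⟪f', y - x⟫ :=
  hf.le_add_fderiv_sub hx hy hfx.hasFDerivAt

end Gradient

theorem critical_point_is_global_min_general {n : ℕ}
    (f h g : EuclideanSpace ℝ (Fin n) → ℝ)
    (f' g' : EuclideanSpace ℝ (Fin n) → EuclideanSpace ℝ (Fin n))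
    (hf : ConvexOn ℝ Set.univ f) (hfd : ∀ x, HasGradientAt f (f' x) x)
    (hg : ConcaveOn ℝ Set.univ g) (hgd : ∀ x, HasGradientAt g (g' x) x)
    (hgpos : ∀ x, 0 < g x) (hnum : ∀ x, 0 ≤ f x + h x)
    (xb v : EuclideanSpace ℝ (Fin n))
    (hv : ∀ z, h xb + ⟪v, z - xb⟫ ≤ h z)
    (hcrit : f' xb + v - ((f xb + h xb) / g xb) • g' xb = 0) :
    ∀ x, (f xb + h xb) / g xb ≤ (f x + h x) / g x := by
  intro x
  set F := (f xb + h xb) / g xb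
  have hF : 0 ≤ F := div_nonneg (hnum xb) (hgpos xb).le
  have hFg : F * g xb = f xb + h xb := div_mul_cancel₀ _ (hgpos xb).ne'
  have hfirst : ⟪f' xb, x - xb⟫ + ⟪v, x - xb⟫ = F * ⟪g' xb, x - xb⟫ := by
    rw [← inner_add_left, ← real_inner_smul_left, ← sub_eq_zero, ← inner_sub_left, hcrit,
      inner_zero_left]
  have hfx := hf.add_inner_gradient_sub_le trivial trivial (hfd xb) (y := x)
  have hgx := hg.le_add_inner_gradient_sub trivial trivial (hgd xb) (y := x)
  rw [le_div_iff₀ (hgpos x)]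
  calc F * g x ≤ F * (g xb + ⟪g' xb, x - xb⟫) := mul_le_mul_of_nonneg_left hgx hF
    _ = f xb + h xb + ⟪f' xb, x - xb⟫ + ⟪v, x - xb⟫ := by rw [mul_add, hFg, ← hfirst]; ring
    _ ≤ f x + h x := by linarith [hv x]

theorem critical_point_is_global_min {n : ℕ}
    (f h g : EuclideanSpace ℝ (Fin n) → ℝ)
    (f' g' : EuclideanSpace ℝ (Fin n) → EuclideanSpace ℝ (Fin n))
    (hf : ConvexOn ℝ Set.univ f) (hfd : ∀ x, HasGradientAt f (f' x) x)
    (hh : ConvexOn ℝ Set.univ h)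
    (hg : ConcaveOn ℝ Set.univ g) (hgd : ∀ x, HasGradientAt g (g' x) x)
    (hgpos : ∀ x, 0 < g x) (hnum : ∀ x, 0 ≤ f x + h x)
    (xb v : EuclideanSpace ℝ (Fin n))
    (hv : ∀ z, h xb + ⟪v, z - xb⟫ ≤ h z)
    (hcrit : f' xb + v - ((f xb + h xb) / g xb) • g' xb = 0) :
    ∀ x, (f xb + h xb) / g xb ≤ (f x + h x) / g x :=
  critical_point_is_global_min_general f h g f' g' hf hfd hg hgd hgpos hnum xb v hv hcrit
end

section
/- Let f : ℝⁿ → ℝ be differentiable with coordinate-wise Lipschitz gradient: f(x + ηeᵢ) ≤ f(x) + ∇ᵢf(x)·η + (cᵢ/2)η² for all x, η, i. Let h be convex separable, g convex positive, θ > 0, and suppose η̄ minimizes η ↦ [f(x) + ∇ᵢf(x)η + ((cᵢ+θ)/2)η² + h(x+ηeᵢ)] / g(x+ηeᵢ) over ℝ. Then with x⁺ = x + η̄eᵢ and F(x) = (f(x)+h(x))/g(x), one has F(x⁺) − F(x) ≤ −(θ/(2g(x⁺)))·η̄². -/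
theorem fcd_sufficient_decrease {n : ℕ}
    (f h g : (Fin n → ℝ) → ℝ) (f' : (Fin n → ℝ) → Fin n → ℝ)
    (c : Fin n → ℝ) (h' : Fin n → ℝ → ℝ) (θ : ℝ) (hθ : 0 < θ)
    (hlip : ∀ (x : Fin n → ℝ) (η : ℝ) (i : Fin n),
      f (x + η • (Pi.single i (1 : ℝ) : Fin n → ℝ)) ≤
        f x + f' x i * η + c i / 2 * η ^ 2)
    (hhconv : ∀ i, ConvexOn ℝ Set.univ (h' i))
    (hsep : ∀ x, h x = ∑ i, h' i (x i))
    (hgconv : ConvexOn ℝ Set.univ g) (hgpos : ∀ x, 0 < g x)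
    (x : Fin n → ℝ) (i : Fin n) (ηbar : ℝ)
    (hmin : ∀ η : ℝ,
      (f x + f' x i * ηbar + (c i + θ) / 2 * ηbar ^ 2 +
          h (x + ηbar • (Pi.single i (1 : ℝ) : Fin n → ℝ))) /
          g (x + ηbar • (Pi.single i (1 : ℝ) : Fin n → ℝ)) ≤
        (f x + f' x i * η + (c i + θ) / 2 * η ^ 2 +
          h (x + η • (Pi.single i (1 : ℝ) : Fin n → ℝ))) /
          g (x + η • (Pi.single i (1 : ℝ) : Fin n → ℝ))) :
    (f (x + ηbar • (Pi.single i (1 : ℝ) : Fin n → ℝ)) +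
        h (x + ηbar • (Pi.single i (1 : ℝ) : Fin n → ℝ))) /
        g (x + ηbar • (Pi.single i (1 : ℝ) : Fin n → ℝ)) -
      (f x + h x) / g x ≤
      -(θ / (2 * g (x + ηbar • (Pi.single i (1 : ℝ) : Fin n → ℝ)))) * ηbar ^ 2 := by
  set xp := x + ηbar • (Pi.single i (1 : ℝ) : Fin n → ℝ) with hxp
  have h0 := hmin 0
  simp only [mul_zero, zero_smul, add_zero] at h0
  have hS : (f x + f' x i * ηbar + (c i + θ) / 2 * ηbar ^ 2 + h xp) / g xp ≤
      (f x + h x) / g x := by simpa using h0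
  have hgp := hgpos xp
  have hl := hlip x ηbar i
  rw [← hxp] at hl
  have hA : (f xp + h xp) / g xp ≤
      (f x + f' x i * ηbar + c i / 2 * ηbar ^ 2 + h xp) / g xp := by
    gcongr
  have hAS : (f x + f' x i * ηbar + c i / 2 * ηbar ^ 2 + h xp) / g xp =
      (f x + f' x i * ηbar + (c i + θ) / 2 * ηbar ^ 2 + h xp) / g xp
        - θ / (2 * g xp) * ηbar ^ 2 := by
    field_simp
    ring
  linarith
end

section
/- Let f : ℝⁿ → ℝ be differentiable with coordinate-wise Lipschitz gradient with constants cᵢ, h convex separable, g positive, θ > 0, F(x) = (f(x)+h(x))/g(x) ≥ 0. Suppose η̄ minimizes η ↦ f(x) + ∇ᵢf(x)η + ((cᵢ+θ)/2)η² + h(x+ηeᵢ) − F(x)·g(x+ηeᵢ). Then with x⁺ = x + η̄eᵢ, F(x⁺) − F(x) ≤ −(θ/(2g(x⁺)))·η̄². -/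
theorem pcd_sufficient_decrease {n : ℕ}
    (f h g : (Fin n → ℝ) → ℝ) (f' : (Fin n → ℝ) → Fin n → ℝ)
    (c : Fin n → ℝ) (h' : Fin n → ℝ → ℝ) (θ : ℝ) (hθ : 0 < θ)
    (hlip : ∀ (x : Fin n → ℝ) (η : ℝ) (i : Fin n),
      f (x + η • (Pi.single i (1 : ℝ) : Fin n → ℝ)) ≤
        f x + f' x i * η + c i / 2 * η ^ 2)
    (hhconv : ∀ i, ConvexOn ℝ Set.univ (h' i))
    (hsep : ∀ x, h x = ∑ i, h' i (x i))
    (hgpos : ∀ x, 0 < g x)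
    (hFnonneg : ∀ x, 0 ≤ (f x + h x) / g x)
    (x : Fin n → ℝ) (i : Fin n) (ηbar : ℝ)
    (hmin : ∀ η : ℝ,
      f x + f' x i * ηbar + (c i + θ) / 2 * ηbar ^ 2 +
          h (x + ηbar • (Pi.single i (1 : ℝ) : Fin n → ℝ)) -
          ((f x + h x) / g x) * g (x + ηbar • (Pi.single i (1 : ℝ) : Fin n → ℝ)) ≤
        f x + f' x i * η + (c i + θ) / 2 * η ^ 2 +
          h (x + η • (Pi.single i (1 : ℝ) : Fin n → ℝ)) -
          ((f x + h x) / g x) * g (x + η • (Pi.single i (1 : ℝ) : Fin n → ℝ))) :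
    (f (x + ηbar • (Pi.single i (1 : ℝ) : Fin n → ℝ)) +
        h (x + ηbar • (Pi.single i (1 : ℝ) : Fin n → ℝ))) /
        g (x + ηbar • (Pi.single i (1 : ℝ) : Fin n → ℝ)) -
      (f x + h x) / g x ≤
      -(θ / (2 * g (x + ηbar • (Pi.single i (1 : ℝ) : Fin n → ℝ)))) * ηbar ^ 2 := by
  set y := x + ηbar • (Pi.single i (1 : ℝ) : Fin n → ℝ) with hy
  have hgx := hgpos x
  have hgy := hgpos y
  have h0 : x + (0:ℝ) • (Pi.single i (1 : ℝ) : Fin n → ℝ) = x := by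
    simp
  have hm := hmin 0
  rw [h0] at hm
  have hFg : ((f x + h x) / g x) * g x = f x + h x := by
    field_simp
  have key : f x + f' x i * ηbar + (c i + θ) / 2 * ηbar ^ 2 + h y -
      ((f x + h x) / g x) * g y ≤ 0 := by
    calc _ ≤ f x + f' x i * 0 + (c i + θ) / 2 * 0 ^ 2 + h x -
        ((f x + h x) / g x) * g x := hm
      _ = 0 := by rw [hFg]; ring
  have hdesc := hlip x ηbar i
  rw [← hy] at hdesc
  have key2 : f y + h y - ((f x + h x) / g x) * g y ≤ -(θ/2) * ηbar ^ 2 := by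
    nlinarith
  have e1 : (f y + h y) / g y - (f x + h x) / g x =
      (f y + h y - (f x + h x) / g x * g y) / g y := by
    field_simp
  have e2 : -(θ / (2 * g y)) * ηbar ^ 2 = (-(θ / 2) * ηbar ^ 2) / g y := by
    field_simp
  rw [e1, e2]
  gcongr
end

section
/- Under the setting of the FCD update (f convex with coordinate-wise Lipschitz gradient constants cᵢ, h convex separable, g > 0, θ > 0), define α = [f(x) + ∇ᵢf(x)η̄ + ((cᵢ+θ)/2)η̄² + h(x+η̄eᵢ)]/g(x+η̄eᵢ) where x⁺ = x + η̄eᵢ. Then F(x⁺) ≤ α ≤ F(x⁺) + σ·(F(x) − F(x⁺)) where σ = (cᵢ + θ)/θ, provided the sufficient decrease (θ/(2g(x⁺)))η̄² ≤ F(x) − F(x⁺) holds. -/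
/-!
Write `x⁺ = x + η̄ eᵢ` and `m = f x + ∇ᵢ f(x) η̄` for the linear model of `f` along the coordinate
direction. Convexity gives `m ≤ f x⁺` and the coordinate descent lemma gives
`f x⁺ ≤ m + (cᵢ/2) η̄²`; comparing the two at `η̄ = 1` also shows `cᵢ ≥ 0`. Dividing by `g x⁺ > 0`,
the descent lemma yields `F x⁺ ≤ α`, while `m ≤ f x⁺` yields `α ≤ F x⁺ + (cᵢ + θ) η̄² / (2 g x⁺)`,
and the last term is `σ` times the left side of the sufficient decrease condition.
-/

section CoordinateStep

variable {ι : Type*} [Fintype ι] [DecidableEq ι]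

theorem Finset.sum_mul_add_smul_single_sub (v x : ι → ℝ) (i : ι) (η : ℝ) :
    ∑ j, v j * ((x + η • (Pi.single i (1 : ℝ) : ι → ℝ)) j - x j) = v i * η := by
  simp [Pi.single_apply]

theorem add_grad_mul_le_of_gradient_ineq {f : (ι → ℝ) → ℝ} {f' : (ι → ℝ) → ι → ℝ}
    (hgrad : ∀ a b : ι → ℝ, f a + ∑ j, f' a j * (b j - a j) ≤ f b)
    (x : ι → ℝ) (i : ι) (η : ℝ) :
    f x + f' x i * η ≤ f (x + η • (Pi.single i (1 : ℝ) : ι → ℝ)) := by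
  have h := hgrad x (x + η • Pi.single i 1)
  rwa [Finset.sum_mul_add_smul_single_sub] at h

theorem coordLipschitz_const_nonneg {f : (ι → ℝ) → ℝ} {f' : (ι → ℝ) → ι → ℝ} {c : ι → ℝ}
    (hgrad : ∀ a b : ι → ℝ, f a + ∑ j, f' a j * (b j - a j) ≤ f b) {x : ι → ℝ} {i : ι}
    (hlip : ∀ η : ℝ,
      f (x + η • (Pi.single i (1 : ℝ) : ι → ℝ)) ≤ f x + f' x i * η + c i / 2 * η ^ 2) :
    0 ≤ c i := by
  linarith [add_grad_mul_le_of_gradient_ineq hgrad x i 1, hlip 1]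

end CoordinateStep

section RatioBounds

variable {fp m H G c θ η : ℝ}

theorem div_le_quadModel_div (hG : 0 < G) (hθ : 0 ≤ θ) (hdescent : fp ≤ m + c / 2 * η ^ 2) :
    (fp + H) / G ≤ (m + (c + θ) / 2 * η ^ 2 + H) / G := by
  gcongr
  nlinarith [sq_nonneg η]

theorem quadModel_div_le (hG : 0 < G) (hθ : 0 < θ) (hcθ : 0 ≤ c + θ) (hmodel : m ≤ fp)
    {D : ℝ} (hdec : θ / (2 * G) * η ^ 2 ≤ D) :
    (m + (c + θ) / 2 * η ^ 2 + H) / G ≤ (fp + H) / G + (c + θ) / θ * D :=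
  calc (m + (c + θ) / 2 * η ^ 2 + H) / G
      ≤ (fp + (c + θ) / 2 * η ^ 2 + H) / G := by gcongr
    _ = (fp + H) / G + (c + θ) / θ * (θ / (2 * G) * η ^ 2) := by field_simp; ring
    _ ≤ (fp + H) / G + (c + θ) / θ * D := by gcongr

end RatioBounds

theorem fcd_alpha_sandwich_general {n : ℕ}
    (f h g : (Fin n → ℝ) → ℝ) (f' : (Fin n → ℝ) → Fin n → ℝ)
    (c : Fin n → ℝ) (θ : ℝ) (hθ : 0 < θ)
    (hgrad : ∀ a b : Fin n → ℝ, f a + ∑ j, f' a j * (b j - a j) ≤ f b)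
    (hlip : ∀ (x : Fin n → ℝ) (η : ℝ) (i : Fin n),
      f (x + η • (Pi.single i (1 : ℝ) : Fin n → ℝ)) ≤
        f x + f' x i * η + c i / 2 * η ^ 2)
    (hgpos : ∀ x, 0 < g x)
    (x : Fin n → ℝ) (i : Fin n) (ηbar : ℝ)
    (hdec : θ / (2 * g (x + ηbar • (Pi.single i (1 : ℝ) : Fin n → ℝ))) * ηbar ^ 2 ≤
      (f x + h x) / g x -
        (f (x + ηbar • (Pi.single i (1 : ℝ) : Fin n → ℝ)) +
            h (x + ηbar • (Pi.single i (1 : ℝ) : Fin n → ℝ))) /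
          g (x + ηbar • (Pi.single i (1 : ℝ) : Fin n → ℝ))) :
    (f (x + ηbar • (Pi.single i (1 : ℝ) : Fin n → ℝ)) +
          h (x + ηbar • (Pi.single i (1 : ℝ) : Fin n → ℝ))) /
        g (x + ηbar • (Pi.single i (1 : ℝ) : Fin n → ℝ)) ≤
      (f x + f' x i * ηbar + (c i + θ) / 2 * ηbar ^ 2 +
          h (x + ηbar • (Pi.single i (1 : ℝ) : Fin n → ℝ))) /
        g (x + ηbar • (Pi.single i (1 : ℝ) : Fin n → ℝ)) ∧
    (f x + f' x i * ηbar + (c i + θ) / 2 * ηbar ^ 2 +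
          h (x + ηbar • (Pi.single i (1 : ℝ) : Fin n → ℝ))) /
        g (x + ηbar • (Pi.single i (1 : ℝ) : Fin n → ℝ)) ≤
      (f (x + ηbar • (Pi.single i (1 : ℝ) : Fin n → ℝ)) +
            h (x + ηbar • (Pi.single i (1 : ℝ) : Fin n → ℝ))) /
          g (x + ηbar • (Pi.single i (1 : ℝ) : Fin n → ℝ)) +
        ((c i + θ) / θ) *
          ((f x + h x) / g x -
            (f (x + ηbar • (Pi.single i (1 : ℝ) : Fin n → ℝ)) +
                h (x + ηbar • (Pi.single i (1 : ℝ) : Fin n → ℝ))) /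
              g (x + ηbar • (Pi.single i (1 : ℝ) : Fin n → ℝ))) := by
  have hc := coordLipschitz_const_nonneg hgrad (hlip x · i)
  exact ⟨div_le_quadModel_div (hgpos _) hθ.le (hlip x ηbar i),
    quadModel_div_le (hgpos _) hθ (by linarith) (add_grad_mul_le_of_gradient_ineq hgrad x i ηbar)
      hdec⟩

theorem fcd_alpha_sandwich {n : ℕ}
    (f h g : (Fin n → ℝ) → ℝ) (f' : (Fin n → ℝ) → Fin n → ℝ)
    (c : Fin n → ℝ) (h' : Fin n → ℝ → ℝ) (θ : ℝ) (hθ : 0 < θ)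
    (hfconv : ConvexOn ℝ Set.univ f)
    (hgrad : ∀ a b : Fin n → ℝ, f a + ∑ j, f' a j * (b j - a j) ≤ f b)
    (hlip : ∀ (x : Fin n → ℝ) (η : ℝ) (i : Fin n),
      f (x + η • (Pi.single i (1 : ℝ) : Fin n → ℝ)) ≤
        f x + f' x i * η + c i / 2 * η ^ 2)
    (hhconv : ∀ i, ConvexOn ℝ Set.univ (h' i))
    (hsep : ∀ x, h x = ∑ i, h' i (x i))
    (hgpos : ∀ x, 0 < g x)
    (x : Fin n → ℝ) (i : Fin n) (ηbar : ℝ)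
    (hdec : θ / (2 * g (x + ηbar • (Pi.single i (1 : ℝ) : Fin n → ℝ))) * ηbar ^ 2 ≤
      (f x + h x) / g x -
        (f (x + ηbar • (Pi.single i (1 : ℝ) : Fin n → ℝ)) +
            h (x + ηbar • (Pi.single i (1 : ℝ) : Fin n → ℝ))) /
          g (x + ηbar • (Pi.single i (1 : ℝ) : Fin n → ℝ))) :
    (f (x + ηbar • (Pi.single i (1 : ℝ) : Fin n → ℝ)) +
          h (x + ηbar • (Pi.single i (1 : ℝ) : Fin n → ℝ))) /
        g (x + ηbar • (Pi.single i (1 : ℝ) : Fin n → ℝ)) ≤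
      (f x + f' x i * ηbar + (c i + θ) / 2 * ηbar ^ 2 +
          h (x + ηbar • (Pi.single i (1 : ℝ) : Fin n → ℝ))) /
        g (x + ηbar • (Pi.single i (1 : ℝ) : Fin n → ℝ)) ∧
    (f x + f' x i * ηbar + (c i + θ) / 2 * ηbar ^ 2 +
          h (x + ηbar • (Pi.single i (1 : ℝ) : Fin n → ℝ))) /
        g (x + ηbar • (Pi.single i (1 : ℝ) : Fin n → ℝ)) ≤
      (f (x + ηbar • (Pi.single i (1 : ℝ) : Fin n → ℝ)) +
            h (x + ηbar • (Pi.single i (1 : ℝ) : Fin n → ℝ))) /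
          g (x + ηbar • (Pi.single i (1 : ℝ) : Fin n → ℝ)) +
        ((c i + θ) / θ) *
          ((f x + h x) / g x -
            (f (x + ηbar • (Pi.single i (1 : ℝ) : Fin n → ℝ)) +
                h (x + ηbar • (Pi.single i (1 : ℝ) : Fin n → ℝ))) /
              g (x + ηbar • (Pi.single i (1 : ℝ) : Fin n → ℝ))) :=
  fcd_alpha_sandwich_general f h g f' c θ hθ hgrad hlip hgpos x i ηbar hdec
end

section
/- Let q : ℕ → ℝ be nonnegative and nonincreasing, r : ℕ → ℝ nonnegative, and suppose there exist constants gbar ≥ ḡ > 0, σ ≥ 1, n ≥ 1 such that for all t: r(t+1) ≤ r(t) − (ḡ/n)·q(t+1) + (σ·gbar/n)·(q(t) − q(t+1)). Then for every t ≥ 1, q(t) ≤ n·(σ·gbar·q(0) + r(0))/(ḡ·t). -/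
theorem sublinear_rate_recursion (q r : ℕ → ℝ) (gbar gl σ : ℝ) (n : ℕ)
    (hq0 : ∀ t, 0 ≤ q t) (hqmono : ∀ t, q (t + 1) ≤ q t)
    (hr : ∀ t, 0 ≤ r t)
    (hgl : 0 < gl) (hgg : gl ≤ gbar) (hσ : 1 ≤ σ) (hn : 1 ≤ n)
    (hrec : ∀ t, r (t + 1) ≤
      r t - (gl / n) * q (t + 1) + (σ * gbar / n) * (q t - q (t + 1))) :
    ∀ t : ℕ, 1 ≤ t →
      q t ≤ (n : ℝ) * (σ * gbar * q 0 + r 0) / (gl * t) := by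
  have hnpos : (0:ℝ) < n := by exact_mod_cast Nat.lt_of_lt_of_le Nat.zero_lt_one hn
  have key : ∀ t : ℕ, r t + (gl / n) * ∑ s ∈ Finset.range t, q (s+1)
      ≤ r 0 + (σ * gbar / n) * (q 0 - q t) := by
    intro t
    induction t with
    | zero => simp
    | succ t ih =>
      rw [Finset.sum_range_succ]
      nlinarith [hrec t, ih]
  intro t ht
  have hanti : Antitone q := antitone_nat_of_succ_le hqmono
  have hsum : (t:ℝ) * q t ≤ ∑ s ∈ Finset.range t, q (s+1) := by
    have : ∀ s ∈ Finset.range t, q t ≤ q (s+1) := fun s hs =>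
      hanti (Nat.succ_le_of_lt (Finset.mem_range.mp hs))
    calc (t:ℝ) * q t = ∑ _s ∈ Finset.range t, q t := by
          simp [Finset.sum_const, mul_comm]
      _ ≤ _ := Finset.sum_le_sum this
  have hgb : 0 < gbar := lt_of_lt_of_le hgl hgg
  have hσpos : (0:ℝ) < σ := lt_of_lt_of_le one_pos hσ
  have hk := key t
  have hqt := hq0 t
  have hrt := hr t
  have htpos : (0:ℝ) < t := by exact_mod_cast ht
  have hn' : (1:ℝ) ≤ n := by exact_mod_cast hn
  rw [le_div_iff₀ (by positivity)]
  have hσg : (0:ℝ) ≤ σ * gbar / n := by positivity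
  have h1 : (gl / n) * ((t:ℝ) * q t) ≤ r 0 + (σ * gbar / n) * q 0 := by
    have h2 := mul_le_mul_of_nonneg_left hsum (le_of_lt (by positivity : (0:ℝ) < gl / n))
    nlinarith [mul_nonneg hσg hqt]
  have hsq : (0:ℝ) ≤ σ * gbar * q 0 :=
    mul_nonneg (mul_nonneg hσpos.le hgb.le) (hq0 0)
  have h4 : gl * ((t:ℝ) * q t) ≤ r 0 * n + σ * gbar * q 0 := by
    have e : gl * ((t:ℝ) * q t) = (gl / n * ((t:ℝ) * q t)) * n := by
      field_simp
    have h3 := mul_le_mul_of_nonneg_right h1 hnpos.le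
    rw [e]
    calc (gl / ↑n * (↑t * q t)) * ↑n ≤ (r 0 + σ * gbar / ↑n * q 0) * ↑n := h3
      _ = r 0 * n + σ * gbar * q 0 := by field_simp
  nlinarith [h4, mul_nonneg hsq (sub_nonneg.mpr hn')]
end
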